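/- For the weight vector w given in the context and for every choice of distinct i ∈ {1,…,6} and j<k<l in {1,…,6}∖{i}, the initial form in_w of the trinomial T_{i,jkl} = (d_k−d_l)(d_i+d_k+d_l) E_j F_{ij} − (d_j−d_l)(d_i+d_j+d_l) E_k F_{ik} + (d_j−d_k)(d_i+d_j+d_k) E_l F_{il} is not a monomial; equivalently, the minimal w-weight among the three monomials E_jF_{ij}, E_kF_{ik}, E_lF_{il} is attained by at least two of them. -/

import Mathlib

open MvPolynomial

noncomputable section

/-- The `w`-weight `⟨w, m⟩` of an exponent vector / monomial `m`. -/
def mWeight {σ : Type*} (w : σ → ℝ) (m : σ →₀ ℕ) : ℝ :=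
  m.sum fun i e => w i * e

/-- The initial form `in_w(f)`: the sum of the terms of `f` whose `w`-weight is
minimal among all terms of `f` (min-convention, trivial valuation). -/
def initialForm {σ K : Type*} [CommRing K] (w : σ → ℝ) (f : MvPolynomial σ K) :
    MvPolynomial σ K :=
  (f.support.filter fun m => ∀ m' ∈ f.support, mWeight w m ≤ mWeight w m').sum
    fun m => monomial m (f.coeff m)

/-- A polynomial is a monomial if it equals `c · x^m` for a single exponent
vector `m` and a nonzero coefficient `c`. -/
def IsMonomial {σ K : Type*} [CommRing K] (f : MvPolynomial σ K) : Prop :=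
  ∃ (m : σ →₀ ℕ) (c : K), c ≠ 0 ∧ f = monomial m c

/-- The initial ideal `in_w(I)`: the ideal generated by the initial forms of
all nonzero elements of `I`. -/
def initialIdeal {σ K : Type*} [CommRing K] (w : σ → ℝ)
    (I : Ideal (MvPolynomial σ K)) : Ideal (MvPolynomial σ K) :=
  Ideal.span {g | ∃ h ∈ I, h ≠ 0 ∧ g = initialForm w h}


/-! ### The Cox ring of a smooth cubic surface

The base field is `K = ℚ(d₁,…,d₆)` (generic parameters), and the polynomial
ring has the 27 variables `E₁,…,E₆`, `F_{ij}` (for unordered pairs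
`{i,j} ⊆ {1,…,6}`), `G₁,…,G₆`, indexed by `Fin 6` (so indices are shifted
down by one). -/

/-- The field `ℚ(d₁,…,d₆)` of rational functions in six variables. -/
abbrev KK : Type := FractionRing (MvPolynomial (Fin 6) ℚ)

/-- The parameter `d_i` as an element of `ℚ(d₁,…,d₆)`. -/
def dK (i : Fin 6) : KK := algebraMap (MvPolynomial (Fin 6) ℚ) KK (X i)

/-- Index type for the 27 variables: `Sum.inl i` is `E_i`, `Sum.inr (Sum.inl s)`
is `F_{ij}` for the unordered (off-diagonal) pair `s = {i,j}`, and
`Sum.inr (Sum.inr i)` is `G_i`. -/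
def CVar : Type :=
  Fin 6 ⊕ ({s : Sym2 (Fin 6) // ¬ s.IsDiag} ⊕ Fin 6)

/-- The variable `E_i`. -/
def Ev (i : Fin 6) : MvPolynomial CVar KK := X (Sum.inl i)

/-- The variable `F_{ij}` (junk value `0` when `i = j`). -/
def Fv (i j : Fin 6) : MvPolynomial CVar KK :=
  if h : ¬ (s(i, j) : Sym2 (Fin 6)).IsDiag
  then X (Sum.inr (Sum.inl ⟨s(i, j), h⟩)) else 0

/-- The variable `G_i`. -/
def Gv (i : Fin 6) : MvPolynomial CVar KK := X (Sum.inr (Sum.inr i))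

/-- The trinomial
`T_{i,jkl} = (d_k−d_l)(d_i+d_k+d_l) E_j F_{ij} − (d_j−d_l)(d_i+d_j+d_l) E_k F_{ik}
 + (d_j−d_k)(d_i+d_j+d_k) E_l F_{il}`. -/
def T (i j k l : Fin 6) : MvPolynomial CVar KK :=
  C ((dK k - dK l) * (dK i + dK k + dK l)) * (Ev j * Fv i j) -
    C ((dK j - dK l) * (dK i + dK j + dK l)) * (Ev k * Fv i k) +
    C ((dK j - dK k) * (dK i + dK j + dK k)) * (Ev l * Fv i l)

/-- The weight vector `w` from the paper (Theorem on cubic surfaces):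
`E = (2,1,0,1,1,1)`, `F₁₃ = 2`, `F₂₃ = F₃₄ = F₃₅ = F₃₆ = 1`, all remaining
`F`- and `G`-weights `0` (indices shifted down by one). -/
def wCox : CVar → ℝ
  | Sum.inl i => ![2, 1, 0, 1, 1, 1] i
  | Sum.inr (Sum.inl s) =>
      if s.val = s(0, 2) then 2
      else if s.val = s(1, 2) ∨ s.val = s(2, 3) ∨ s.val = s(2, 4) ∨ s.val = s(2, 5)
      then 1 else 0
  | Sum.inr (Sum.inr _) => 0


/-! ### Auxiliary machinery -/

lemma mWeight_add' {σ : Type*} (w : σ → ℝ) (m m' : σ →₀ ℕ) :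
    mWeight w (m + m') = mWeight w m + mWeight w m' :=
  Finsupp.sum_add_index' (fun _ => by simp) (fun i e1 e2 => by push_cast; ring)

lemma mWeight_single' {σ : Type*} (w : σ → ℝ) (a : σ) (n : ℕ) :
    mWeight w (Finsupp.single a n) = w a * n :=
  Finsupp.sum_single_index (by simp)

lemma mWeight_pair {σ : Type*} (w : σ → ℝ) (a b : σ) :
    mWeight w (Finsupp.single a 1 + Finsupp.single b 1) = w a + w b := by
  rw [mWeight_add', mWeight_single', mWeight_single']; push_cast; ring

lemma coeff_initialForm {σ K : Type*} [CommRing K] (w : σ → ℝ) (f : MvPolynomial σ K)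
    (m0 : σ →₀ ℕ) (h0 : f.coeff m0 ≠ 0) (hmin : ∀ m' ∈ f.support, mWeight w m0 ≤ mWeight w m') :
    (initialForm w f).coeff m0 = f.coeff m0 := by
  classical
  rw [initialForm, coeff_sum]
  have : ∀ m ∈ (f.support.filter fun m => ∀ m' ∈ f.support, mWeight w m ≤ mWeight w m'),
      coeff m0 (monomial m (f.coeff m)) = if m = m0 then f.coeff m else 0 :=
    fun m _ => coeff_monomial m0 m _
  rw [Finset.sum_congr rfl this, Finset.sum_ite_eq']
  rw [if_pos]
  exact Finset.mem_filter.mpr ⟨mem_support_iff.mpr h0, hmin⟩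

lemma not_isMonomial_of_two {σ K : Type*} [CommRing K] (w : σ → ℝ) (f : MvPolynomial σ K)
    (m1 m2 : σ →₀ ℕ) (hne : m1 ≠ m2) (h1 : f.coeff m1 ≠ 0) (h2 : f.coeff m2 ≠ 0)
    (hmin1 : ∀ m' ∈ f.support, mWeight w m1 ≤ mWeight w m')
    (hmin2 : ∀ m' ∈ f.support, mWeight w m2 ≤ mWeight w m') :
    ¬ IsMonomial (initialForm w f) := by
  classical
  rintro ⟨m, c, -, hmon⟩
  have e1 : (initialForm w f).coeff m1 ≠ 0 := by
    rw [coeff_initialForm w f m1 h1 hmin1]; exact h1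
  have e2 : (initialForm w f).coeff m2 ≠ 0 := by
    rw [coeff_initialForm w f m2 h2 hmin2]; exact h2
  rw [hmon, coeff_monomial] at e1 e2
  have hm1 : m = m1 := by by_contra h; exact e1 (if_neg h)
  have hm2 : m = m2 := by by_contra h; exact e2 (if_neg h)
  exact hne (hm1 ▸ hm2)

lemma dK_ne (a b : Fin 6) (hab : a ≠ b) : dK a - dK b ≠ 0 := by
  rw [dK, dK, ← map_sub]
  rw [map_ne_zero_iff _ (IsFractionRing.injective (MvPolynomial (Fin 6) ℚ) KK)]
  exact sub_ne_zero.mpr (fun h => hab (X_injective h))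

lemma dK_sum_ne (c a b : Fin 6) (hca : c ≠ a) (hcb : c ≠ b) : dK c + dK a + dK b ≠ 0 := by
  rw [dK, dK, dK, ← map_add, ← map_add]
  rw [map_ne_zero_iff _ (IsFractionRing.injective (MvPolynomial (Fin 6) ℚ) KK)]
  intro h0
  have h := congrArg (coeff (Finsupp.single c 1)) h0
  classical
  rw [coeff_add, coeff_add, coeff_X, coeff_X', coeff_X', coeff_zero] at h
  rw [if_neg (fun he => hca ((Finsupp.single_left_inj one_ne_zero).mp he).symm),
    if_neg (fun he => hcb ((Finsupp.single_left_inj one_ne_zero).mp he).symm)] at h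
  norm_num at h

lemma cT_ne (a b c : Fin 6) (hab : a ≠ b) (hca : c ≠ a) (hcb : c ≠ b) :
    (dK a - dK b) * (dK c + dK a + dK b) ≠ 0 :=
  mul_ne_zero (dK_ne a b hab) (dK_sum_ne c a b hca hcb)

def eVar (i : Fin 6) : CVar := Sum.inl i

def fpair (i j : Fin 6) (h : i ≠ j) : CVar :=
  Sum.inr (Sum.inl ⟨s(i, j), by simpa using h⟩)

lemma eVar_ne (a b : Fin 6) (h : a ≠ b) : eVar a ≠ eVar b :=
  fun he => h (Sum.inl.inj he)

lemma fpair_ne_eVar (i j : Fin 6) (h : i ≠ j) (t : Fin 6) : fpair i j h ≠ eVar t :=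
  fun he => by simp [fpair, eVar] at he

def emv (i j : Fin 6) (h : i ≠ j) : CVar →₀ ℕ :=
  Finsupp.single (eVar j) 1 + Finsupp.single (fpair i j h) 1

lemma monC (a b : Fin 6) (hab : a ≠ b) (c : KK) :
    C c * (Ev b * Fv a b) = monomial (emv a b hab) c := by
  rw [Ev, Fv, dif_pos (by simpa using hab)]
  unfold X
  rw [monomial_mul, C_mul_monomial, mul_one, mul_one]
  rfl

lemma T_eq (i j k l : Fin 6) (hij : i ≠ j) (hik : i ≠ k) (hil : i ≠ l) :
    T i j k l = monomial (emv i j hij) ((dK k - dK l) * (dK i + dK k + dK l))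
      + monomial (emv i k hik) (-((dK j - dK l) * (dK i + dK j + dK l)))
      + monomial (emv i l hil) ((dK j - dK k) * (dK i + dK j + dK k)) := by
  rw [T, monC i j hij, monC i k hik, monC i l hil, sub_eq_add_neg, ← map_neg]

lemma em_ne (i j k : Fin 6) (hij : i ≠ j) (hik : i ≠ k) (hjk : j ≠ k) :
    emv i j hij ≠ emv i k hik := by
  intro h
  rw [emv, emv] at h
  have h2 := DFunLike.congr_fun h (eVar j)
  rw [Finsupp.add_apply, Finsupp.add_apply, Finsupp.single_eq_same,
    Finsupp.single_eq_of_ne' (fpair_ne_eVar i j hij j),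
    Finsupp.single_eq_of_ne' (eVar_ne k j (Ne.symm hjk)),
    Finsupp.single_eq_of_ne' (fpair_ne_eVar i k hik j)] at h2
  norm_num at h2

/-- Real-valued weight of the monomial `E_t F_{it}`. -/
def Wt (i t : Fin 6) : ℝ :=
  ![2, 1, 0, 1, 1, 1] t +
    (if (s(i, t) : Sym2 (Fin 6)) = s(0, 2) then 2
     else if s(i, t) = s(1, 2) ∨ s(i, t) = s(2, 3) ∨ s(i, t) = s(2, 4) ∨ s(i, t) = s(2, 5)
     then 1 else 0)

lemma mWeight_emv (i t : Fin 6) (h : i ≠ t) : mWeight wCox (emv i t h) = Wt i t := by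
  rw [emv, mWeight_pair]; rfl

/-- Natural-number version of `Wt`. -/
def Wn (i t : Fin 6) : ℕ :=
  (if t = 0 then 2 else if t = 2 then 0 else 1) +
    (if (i = 0 ∧ t = 2) ∨ (i = 2 ∧ t = 0) then 2 else if i = 2 ∨ t = 2 then 1 else 0)

lemma vec5_eval : (![2, 1, 0, 1, 1, 1] : Fin 6 → ℝ) 5 = 1 := rfl

lemma Wt_cast (i t : Fin 6) (h : i ≠ t) : Wt i t = (Wn i t : ℝ) := by
  fin_cases i <;> fin_cases t <;>
    simp_all (config := { decide := true }) [Wt, Wn, Sym2.eq_iff, Fin.ext_iff,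
      Matrix.cons_val_succ, vec5_eval] <;> norm_num

lemma Wn_disj : ∀ i j k l : Fin 6, i ≠ j → i ≠ k → i ≠ l → j < k → k < l →
    (Wn i j = Wn i k ∧ Wn i j ≤ Wn i l) ∨ (Wn i j = Wn i l ∧ Wn i j ≤ Wn i k) ∨
      (Wn i k = Wn i l ∧ Wn i k ≤ Wn i j) := by decide

lemma T_not (i j k l : Fin 6) (hij : i ≠ j) (hik : i ≠ k) (hil : i ≠ l)
    (hjk : j ≠ k) (hjl : j ≠ l) (hkl : k ≠ l)
    (hd : (Wt i j = Wt i k ∧ Wt i j ≤ Wt i l) ∨ (Wt i j = Wt i l ∧ Wt i j ≤ Wt i k) ∨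
      (Wt i k = Wt i l ∧ Wt i k ≤ Wt i j)) :
    ¬ IsMonomial (initialForm wCox (T i j k l)) := by
  classical
  have c1ne : (dK k - dK l) * (dK i + dK k + dK l) ≠ 0 := cT_ne k l i hkl hik hil
  have c2ne : -((dK j - dK l) * (dK i + dK j + dK l)) ≠ 0 :=
    neg_ne_zero.mpr (cT_ne j l i hjl hij hil)
  have c3ne : (dK j - dK k) * (dK i + dK j + dK k) ≠ 0 := cT_ne j k i hjk hij hik
  have co1 : (T i j k l).coeff (emv i j hij) = (dK k - dK l) * (dK i + dK k + dK l) := by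
    rw [T_eq i j k l hij hik hil, coeff_add, coeff_add, coeff_monomial, coeff_monomial,
      coeff_monomial, if_pos rfl, if_neg (em_ne i k j hik hij (Ne.symm hjk)),
      if_neg (em_ne i l j hil hij (Ne.symm hjl))]
    ring
  have co2 : (T i j k l).coeff (emv i k hik) = -((dK j - dK l) * (dK i + dK j + dK l)) := by
    rw [T_eq i j k l hij hik hil, coeff_add, coeff_add, coeff_monomial, coeff_monomial,
      coeff_monomial, if_pos rfl, if_neg (em_ne i j k hij hik hjk),
      if_neg (em_ne i l k hil hik (Ne.symm hkl))]
    ring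
  have co3 : (T i j k l).coeff (emv i l hil) = (dK j - dK k) * (dK i + dK j + dK k) := by
    rw [T_eq i j k l hij hik hil, coeff_add, coeff_add, coeff_monomial, coeff_monomial,
      coeff_monomial, if_pos rfl, if_neg (em_ne i j l hij hil hjl),
      if_neg (em_ne i k l hik hil hkl)]
    ring
  have hsupp : ∀ m ∈ (T i j k l).support,
      m = emv i j hij ∨ m = emv i k hik ∨ m = emv i l hil := by
    intro m hm
    rw [mem_support_iff] at hm
    by_contra hc
    push_neg at hc
    apply hm
    rw [T_eq i j k l hij hik hil, coeff_add, coeff_add, coeff_monomial, coeff_monomial,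
      coeff_monomial, if_neg (fun he => hc.1 he.symm), if_neg (fun he => hc.2.1 he.symm),
      if_neg (fun he => hc.2.2 he.symm)]
    ring
  have w1 := mWeight_emv i j hij
  have w2 := mWeight_emv i k hik
  have w3 := mWeight_emv i l hil
  have hminOf : ∀ m0 : CVar →₀ ℕ, mWeight wCox m0 ≤ Wt i j → mWeight wCox m0 ≤ Wt i k →
      mWeight wCox m0 ≤ Wt i l →
      ∀ m' ∈ (T i j k l).support, mWeight wCox m0 ≤ mWeight wCox m' := by
    intro m0 hA hB hC m' hm'
    rcases hsupp m' hm' with h | h | h <;> rw [h]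
    · rw [w1]; exact hA
    · rw [w2]; exact hB
    · rw [w3]; exact hC
  rcases hd with ⟨he, hle⟩ | ⟨he, hle⟩ | ⟨he, hle⟩
  · exact not_isMonomial_of_two wCox _ (emv i j hij) (emv i k hik) (em_ne i j k hij hik hjk)
      (by rw [co1]; exact c1ne) (by rw [co2]; exact c2ne)
      (hminOf _ (by rw [w1]) (by rw [w1, he]) (by rw [w1]; exact hle))
      (hminOf _ (by rw [w2, ← he]) (by rw [w2]) (by rw [w2, ← he]; exact hle))
  · exact not_isMonomial_of_two wCox _ (emv i j hij) (emv i l hil) (em_ne i j l hij hil hjl)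
      (by rw [co1]; exact c1ne) (by rw [co3]; exact c3ne)
      (hminOf _ (by rw [w1]) (by rw [w1]; exact hle) (by rw [w1, he]))
      (hminOf _ (by rw [w3, ← he]) (by rw [w3, ← he]; exact hle) (by rw [w3]))
  · exact not_isMonomial_of_two wCox _ (emv i k hik) (emv i l hil) (em_ne i k l hik hil hkl)
      (by rw [co2]; exact c2ne) (by rw [co3]; exact c3ne)
      (hminOf _ (by rw [w2]; exact hle) (by rw [w2]) (by rw [w2, he]))
      (hminOf _ (by rw [w3, ← he]; exact hle) (by rw [w3, ← he]) (by rw [w3]))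

/-- for the weight vector `w` of the paper and all distinct
`i` and `j < k < l` (all in `{1,…,6}`, here `Fin 6`), the initial form of the
trinomial `T_{i,jkl}` is not a monomial. -/
theorem stmt_7 :
    ∀ i j k l : Fin 6, i ≠ j → i ≠ k → i ≠ l → j < k → k < l →
      ¬ IsMonomial (initialForm wCox (T i j k l)) := by
  intro i j k l hij hik hil hjk hkl
  have hjk' : j ≠ k := ne_of_lt hjk
  have hkl' : k ≠ l := ne_of_lt hkl
  have hjl' : j ≠ l := ne_of_lt (hjk.trans hkl)
  apply T_not i j k l hij hik hil hjk' hjl' hkl'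
  have hd := Wn_disj i j k l hij hik hil hjk hkl
  rw [Wt_cast i j hij, Wt_cast i k hik, Wt_cast i l hil]
  rcases hd with ⟨h1, h2⟩ | ⟨h1, h2⟩ | ⟨h1, h2⟩
  · exact Or.inl ⟨by exact_mod_cast h1, by exact_mod_cast h2⟩
  · exact Or.inr (Or.inl ⟨by exact_mod_cast h1, by exact_mod_cast h2⟩)
  · exact Or.inr (Or.inr ⟨by exact_mod_cast h1, by exact_mod_cast h2⟩)

end
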